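/- arXiv:1910.13417 — 5 statements merged into one kernel-verified Lean document; each statement's English description precedes it below -/
import Mathlib

section
/- Let G and N be groups and Φ : G →* MulAut N a group homomorphism. Let F_Φ : SingleObj G ⥤ Cat be the functor sending the unique object of SingleObj G to Cat.of (SingleObj N) and sending each endomorphism g : G to the endofunctor of SingleObj N induced by the monoid homomorphism underlying Φ g. Then the Grothendieck construction Grothendieck F_Φ is equivalent, as a category, to the one-object category SingleObj (N ⋊[Φ] G) of the semidirect product N ⋊[Φ] G. -/
open CategoryTheory

/-- The functor `SingleObj G ⥤ Cat` sending the unique object to `Cat.of (SingleObj N)`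
and each `g : G` to the endofunctor of `SingleObj N` induced by the monoid homomorphism
underlying `Φ g`. -/
def semidirectActionFunctor {G N : Type*} [Group G] [Group N] (Φ : G →* MulAut N) :
    SingleObj G ⥤ Cat where
  obj _ := Cat.of (SingleObj N)
  map g := (SingleObj.mapHom N N (Φ g).toMonoidHom).toCatHom
  map_id _ := by
    show (SingleObj.mapHom N N (Φ 1).toMonoidHom).toCatHom = _
    rw [map_one]
    rfl
  map_comp f g := by
    show (SingleObj.mapHom N N (Φ (g * f)).toMonoidHom).toCatHom = _
    rw [map_mul]
    rfl

namespace semidirectActionFunctor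

variable {G N : Type*} [Group G] [Group N] (Φ : G →* MulAut N)

/-- In `Grothendieck (semidirectActionFunctor Φ)` the composite `(g, n) ≫ (g', n')` has fiber
`n' * Φ g' n * 1` (the `1` being the `eqToHom` of `Grothendieck.comp`), which is the `left`
component of `⟨n', g'⟩ * ⟨n, g⟩`; recall `f ≫ f' = f' * f` in `SingleObj`. -/
def grothendieckToSingleObj :
    Grothendieck (semidirectActionFunctor Φ) ⥤ SingleObj (N ⋊[Φ] G) where
  obj _ := SingleObj.star _
  map f := ⟨f.fiber, f.base⟩
  map_id _ := rfl
  map_comp _ _ := SemidirectProduct.ext (mul_one _) rfl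

def fullyFaithfulGrothendieckToSingleObj : (grothendieckToSingleObj Φ).FullyFaithful where
  preimage p := ⟨p.right, p.left⟩

lemma grothendieckToSingleObj_obj_surjective :
    Function.Surjective (grothendieckToSingleObj Φ).obj :=
  fun _ => ⟨⟨SingleObj.star G, SingleObj.star N⟩, rfl⟩

instance : (grothendieckToSingleObj Φ).IsEquivalence where
  faithful := (fullyFaithfulGrothendieckToSingleObj Φ).faithful
  full := (fullyFaithfulGrothendieckToSingleObj Φ).full
  essSurj := Functor.essSurj_of_surj (grothendieckToSingleObj_obj_surjective Φ)

end semidirectActionFunctor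

theorem grothendieck_equiv_singleObj_semidirectProduct
    {G N : Type*} [Group G] [Group N] (Φ : G →* MulAut N) :
    Nonempty (Grothendieck (semidirectActionFunctor Φ) ≌ SingleObj (N ⋊[Φ] G)) :=
  ⟨(semidirectActionFunctor.grothendieckToSingleObj Φ).asEquivalence⟩
end

section
/- Let G and N be groups and Φ : G →* MulAut N a group homomorphism. Let F_Φ : SingleObj G ⥤ Cat be the functor sending the unique object of SingleObj G to Cat.of (SingleObj N) and sending each endomorphism g : G to the endofunctor of SingleObj N induced by the monoid homomorphism underlying Φ g. Then the endomorphism monoid of the unique object of the Grothendieck construction Grothendieck F_Φ is isomorphic, as a monoid, to the semidirect product N ⋊[Φ] G. -/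
open CategoryTheory

def endStarMulEquivSemidirectProduct {G N : Type*} [Group G] [Group N] (Φ : G →* MulAut N) :
    End ({ base := SingleObj.star G, fiber := SingleObj.star N } :
      Grothendieck (semidirectActionFunctor Φ)) ≃* N ⋊[Φ] G where
  toFun f := ⟨f.fiber, f.base⟩
  invFun p := ⟨p.right, p.left⟩
  left_inv _ := rfl
  right_inv _ := rfl
  -- The fiber of `g ≫ f` is `eqToHom rfl ≫ (Φ f.base) g.fiber ≫ f.fiber`, which is the
  -- semidirect product law `f.fiber * Φ f.base g.fiber` once the identity is dropped.
  map_mul' _ _ := SemidirectProduct.ext (Category.id_comp _) rfl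

theorem end_grothendieck_mulEquiv_semidirectProduct
    {G N : Type*} [Group G] [Group N] (Φ : G →* MulAut N) :
    Nonempty
      (End ({ base := SingleObj.star G, fiber := SingleObj.star N } :
          Grothendieck (semidirectActionFunctor Φ)) ≃* (N ⋊[Φ] G)) :=
  ⟨endStarMulEquivSemidirectProduct Φ⟩
end

section
/- Let G and N be groups and let Φ, Ψ : G →* MulAut N be group homomorphisms. Let F_Φ, F_Ψ : SingleObj G ⥤ Cat be the functors sending the unique object of SingleObj G to Cat.of (SingleObj N) and sending each endomorphism g : G to the endofunctor of SingleObj N induced by the monoid homomorphism underlying Φ g (respectively Ψ g). If the categories Grothendieck F_Φ and Grothendieck F_Ψ are equivalent, then the semidirect products N ⋊[Φ] G and N ⋊[Ψ] G are isomorphic as groups. -/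
open CategoryTheory

/-!
A morphism `(g, n)` of the Grothendieck construction of `semidirectActionFunctor Φ` is a
pair `g : G`, `n : N`, and composition is `(g', n') ∘ (g, n) = (g' g, n' · Φ g' n)`: the
semidirect-product law. Hence every endomorphism monoid of that category is `N ⋊[Φ] G`, and
an equivalence, being fully faithful, identifies the endomorphism monoids of an object and
of its image.
-/

lemma SingleObj.eqToHom_eq_one {M : Type*} [Monoid M] {a b : SingleObj M} (h : a = b) :
    eqToHom h = (1 : M) := by
  subst h
  rfl

namespace semidirectActionFunctor

variable {G N : Type*} [Group G] [Group N] {Φ : G →* MulAut N}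

def homToSemidirectProduct {X Y : Grothendieck (semidirectActionFunctor Φ)} (f : X ⟶ Y) :
    N ⋊[Φ] G :=
  ⟨f.fiber, f.base⟩

lemma homToSemidirectProduct_comp {X Y Z : Grothendieck (semidirectActionFunctor Φ)}
    (f : X ⟶ Y) (g : Y ⟶ Z) :
    homToSemidirectProduct (f ≫ g) = homToSemidirectProduct g * homToSemidirectProduct f := by
  refine SemidirectProduct.ext ?_ rfl
  -- composition in `SingleObj N` is reversed multiplication, so the fiber of `f ≫ g` is
  -- `g.fiber * Φ g.base f.fiber * 1`
  show eqToHom _ ≫ _ ≫ _ = _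
  erw [SingleObj.eqToHom_eq_one]
  exact mul_one (M := N) _

variable (Φ) in
def endMulEquiv (X : Grothendieck (semidirectActionFunctor Φ)) : End X ≃* N ⋊[Φ] G where
  toFun := homToSemidirectProduct
  invFun p := ⟨p.right, p.left⟩
  left_inv _ := rfl
  right_inv _ := rfl
  map_mul' f g := homToSemidirectProduct_comp g f

end semidirectActionFunctor

theorem grothendieck_equivalence_implies_semidirectProduct_iso
    {G N : Type*} [Group G] [Group N] (Φ Ψ : G →* MulAut N)
    (h : Nonempty
      (Grothendieck (semidirectActionFunctor Φ) ≌ Grothendieck (semidirectActionFunctor Ψ))) :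
    Nonempty ((N ⋊[Φ] G) ≃* (N ⋊[Ψ] G)) := by
  obtain ⟨e⟩ := h
  let X : Grothendieck (semidirectActionFunctor Φ) := ⟨SingleObj.star G, SingleObj.star N⟩
  exact ⟨(semidirectActionFunctor.endMulEquiv Φ X).symm.trans
    ((e.fullyFaithfulFunctor.mulEquivEnd X).trans (semidirectActionFunctor.endMulEquiv Ψ _))⟩
end

section
/- Let G be a group, A a commutative group, and Φ : G →* MulAut A. Then the set P = { p : (A ⋊[Φ] G) × (A ⋊[Φ] G) | p.1.right = p.2.right } of pairs of elements of the semidirect product having equal G-components is a submonoid of the product monoid (A ⋊[Φ] G) × (A ⋊[Φ] G), and the map P → A ⋊[Φ] G sending a pair (⟨a, g⟩, ⟨a', g⟩) to ⟨a * a', g⟩ is a monoid homomorphism. -/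
open SemidirectProduct

theorem pairs_with_equal_right_submonoid_and_horizontal_composition_hom
    {G A : Type*} [Group G] [CommGroup A] (Φ : G →* MulAut A) :
    ∃ P : Submonoid ((A ⋊[Φ] G) × (A ⋊[Φ] G)),
      (P : Set ((A ⋊[Φ] G) × (A ⋊[Φ] G))) = {p | p.1.right = p.2.right} ∧
      ∃ f : P →* A ⋊[Φ] G,
        ∀ p : P, f p = ⟨(p : (A ⋊[Φ] G) × (A ⋊[Φ] G)).1.left *
            (p : (A ⋊[Φ] G) × (A ⋊[Φ] G)).2.left,
          (p : (A ⋊[Φ] G) × (A ⋊[Φ] G)).1.right⟩ := by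
  refine ⟨{ carrier := {p | p.1.right = p.2.right},
            one_mem' := rfl,
            mul_mem' := by
              intro a b ha hb
              simp only [Set.mem_setOf_eq] at *
              simp [ha, hb] }, rfl, ?_⟩
  refine ⟨{ toFun := fun p => ⟨p.1.1.left * p.1.2.left, p.1.1.right⟩,
            map_one' := by ext <;> simp,
            map_mul' := by
              rintro ⟨⟨x, y⟩, hxy⟩ ⟨⟨z, w⟩, hzw⟩
              replace hxy : x.right = y.right := hxy
              replace hzw : z.right = w.right := hzw
              ext <;> simp [hxy, mul_assoc, mul_left_comm] }, fun p => rfl⟩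
end

section
/- Let M be a monoid, A a commutative monoid, and φ : M →* Monoid.End A a monoid homomorphism such that φ m : A → A is surjective for every m : M. Let F_φ : SingleObj M ⥤ Cat be the functor sending the unique object of SingleObj M to Cat.of (SingleObj A) and sending each endomorphism m : M to the endofunctor of SingleObj A induced by φ m. Then, in the endomorphism monoid of the unique object of the Grothendieck construction Grothendieck F_φ, the submonoid generated by the set of endomorphisms whose base component is the identity of M together with the set of endomorphisms whose fiber component is the identity of A is the whole endomorphism monoid. -/
open CategoryTheory

/-- The functor `SingleObj M ⥤ Cat` sending the unique object to `Cat.of (SingleObj A)`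
and each `m : M` to the endofunctor of `SingleObj A` induced by the monoid endomorphism
`φ m` of `A`. -/
def monoidActionFunctor {M A : Type*} [Monoid M] [CommMonoid A] (φ : M →* Monoid.End A) :
    SingleObj M ⥤ Cat where
  obj _ := Cat.of (SingleObj A)
  map m := (SingleObj.mapHom A A (φ m)).toCatHom
  map_id _ := by
    show (SingleObj.mapHom A A (φ 1)).toCatHom = _
    rw [map_one]
    rfl
  map_comp f g := by
    show (SingleObj.mapHom A A (φ (g * f))).toCatHom = _
    rw [map_mul]
    rfl

/-! The endomorphism `(m, φ m a)` of the Grothendieck construction is the globular square `(1, a)`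
followed by the horizontal identity square `(m, 1)`; surjectivity of `φ m` makes every
endomorphism `(m, b)` of this form. -/

namespace monoidActionFunctor

variable {M A : Type*} [Monoid M] [CommMonoid A] (φ : M →* Monoid.End A)

abbrev star : Grothendieck (monoidActionFunctor φ) :=
  { base := SingleObj.star M, fiber := SingleObj.star A }

def globularSquare (a : A) : End (star φ) := { base := 𝟙 _, fiber := a }

def horizontalIdSquare (m : M) : End (star φ) := { base := m, fiber := 𝟙 _ }

theorem horizontalIdSquare_mul_globularSquare (m : M) (a : A) :
    horizontalIdSquare φ m * globularSquare φ a = { base := m, fiber := φ m a } := by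
  apply Grothendieck.ext
  · -- composition in `SingleObj A` is multiplication in reverse order, and `eqToHom` is `1`
    change (1 : A) * φ m a * 1 * 1 = φ m a
    simp only [one_mul, mul_one]
  · exact Category.id_comp _

theorem exists_eq_horizontalIdSquare_mul_globularSquare
    (hsurj : ∀ m : M, Function.Surjective (φ m)) (f : End (star φ)) :
    ∃ m a, f = horizontalIdSquare φ m * globularSquare φ a := by
  obtain ⟨m, b⟩ := f
  obtain ⟨a, rfl⟩ := hsurj m b
  exact ⟨m, a, (horizontalIdSquare_mul_globularSquare φ m a).symm⟩

end monoidActionFunctor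

open monoidActionFunctor in
theorem grothendieck_end_generated_by_globular_and_identity_squares
    {M A : Type*} [Monoid M] [CommMonoid A] (φ : M →* Monoid.End A)
    (hsurj : ∀ m : M, Function.Surjective (φ m)) :
    Submonoid.closure
      ({ f : End ({ base := SingleObj.star M, fiber := SingleObj.star A } :
            Grothendieck (monoidActionFunctor φ)) | f.base = 𝟙 (SingleObj.star M) } ∪
        { f | f.fiber = 𝟙 (SingleObj.star A) }) = ⊤ := by
  refine eq_top_iff.2 fun f _ ↦ ?_
  obtain ⟨m, a, rfl⟩ := exists_eq_horizontalIdSquare_mul_globularSquare φ hsurj f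
  exact mul_mem (Submonoid.subset_closure (Or.inr rfl)) (Submonoid.subset_closure (Or.inl rfl))
end
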